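/- Let Ī > 0 and let (e_k)_{k≥0}, (T_k)_{k≥0} be sequences of integrable random variables on a probability space with e_k ≥ 0 and T_k ≥ 1 almost surely for every k. Define the virtual queue by X_0 = 0 and X_{k+1} = max(X_k + e_k − Ī·T_k, 0). If the sequence (X_k) is mean rate stable, i.e. lim_{K→∞} E[X_K]/K = 0, then limsup_{K→∞} ( E[Σ_{k<K} e_k] / E[Σ_{k<K} T_k] ) ≤ Ī. -/
import Mathlib


open MeasureTheory Filter Finset

/-- Lemma 2: mean rate stability of the interference virtual queue implies the
long-term average interference constraint `I ≤ Ī`. -/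
theorem interference_virtual_queue_mean_rate_stable_implies_avg_interference
    {Ω : Type*} [MeasurableSpace Ω] (μ : Measure Ω) [IsProbabilityMeasure μ]
    (Ibar : ℝ) (hIbar : 0 < Ibar)
    (e T X : ℕ → Ω → ℝ)
    (he_int : ∀ k, Integrable (e k) μ)
    (hT_int : ∀ k, Integrable (T k) μ)
    (he_nonneg : ∀ k, ∀ᵐ ω ∂μ, 0 ≤ e k ω)
    (hT_ge : ∀ k, ∀ᵐ ω ∂μ, 1 ≤ T k ω)
    (hX0 : ∀ ω, X 0 ω = 0)
    (hXrec : ∀ k ω, X (k + 1) ω = max (X k ω + e k ω - Ibar * T k ω) 0)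
    (hstable : Tendsto (fun K : ℕ => (∫ ω, X K ω ∂μ) / K) atTop (nhds 0)) :
    limsup (fun K : ℕ =>
        (∫ ω, ∑ k ∈ range K, e k ω ∂μ) / (∫ ω, ∑ k ∈ range K, T k ω ∂μ))
      atTop ≤ Ibar := by
  -- notation
  set N : ℕ → ℝ := fun K => ∫ ω, ∑ k ∈ range K, e k ω ∂μ with hN
  set D : ℕ → ℝ := fun K => ∫ ω, ∑ k ∈ range K, T k ω ∂μ with hD
  -- integrability of X
  have hXint : ∀ K, Integrable (X K) μ := by
    intro K
    induction K with
    | zero =>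
      have : X 0 = fun _ => (0 : ℝ) := funext hX0
      rw [this]; exact integrable_const 0
    | succ k ih =>
      have : X (k + 1) = fun ω => max (X k ω + e k ω - Ibar * T k ω) 0 :=
        funext (hXrec k)
      rw [this]
      exact ((ih.add (he_int k)).sub ((hT_int k).const_mul Ibar)).pos_part
  -- X is nonnegative
  have hXnn : ∀ K ω, 0 ≤ X K ω := by
    intro K ω
    cases K with
    | zero => simp [hX0]
    | succ k => rw [hXrec]; exact le_max_right _ _
  -- pointwise lower bound on X
  have hXge : ∀ K ω, ∑ k ∈ range K, (e k ω - Ibar * T k ω) ≤ X K ω := by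
    intro K ω
    induction K with
    | zero => simp [hX0]
    | succ k ih =>
      rw [Finset.sum_range_succ, hXrec]
      have : X k ω + (e k ω - Ibar * T k ω) ≤ max (X k ω + e k ω - Ibar * T k ω) 0 := by
        rw [← add_sub_assoc]; exact le_max_left _ _
      linarith
  -- integral inequality : N K - Ibar * D K ≤ ∫ X K
  have hkey : ∀ K, N K - Ibar * D K ≤ ∫ ω, X K ω ∂μ := by
    intro K
    have hint1 : Integrable (fun ω => ∑ k ∈ range K, (e k ω - Ibar * T k ω)) μ :=
      integrable_finset_sum _ fun k _ => (he_int k).sub ((hT_int k).const_mul Ibar)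
    have h := integral_mono hint1 (hXint K) (fun ω => hXge K ω)
    have hcalc : (∫ ω, ∑ k ∈ range K, (e k ω - Ibar * T k ω) ∂μ) = N K - Ibar * D K := by
      rw [integral_finset_sum (μ := μ) (range K) (f := fun k ω => e k ω - Ibar * T k ω)
        (fun k _ => (he_int k).sub ((hT_int k).const_mul Ibar))]
      have : ∀ k ∈ range K, (∫ ω, (e k ω - Ibar * T k ω) ∂μ)
          = (∫ ω, e k ω ∂μ) - Ibar * ∫ ω, T k ω ∂μ := by
        intro k _
        rw [integral_sub (he_int k) ((hT_int k).const_mul Ibar), integral_const_mul]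
      rw [Finset.sum_congr rfl this, Finset.sum_sub_distrib, ← Finset.mul_sum,
        hN, hD]
      simp only
      rw [integral_finset_sum _ fun k _ => he_int k,
        integral_finset_sum _ fun k _ => hT_int k]
    rwa [hcalc] at h
  -- D K ≥ K
  have hDge : ∀ K : ℕ, (K : ℝ) ≤ D K := by
    intro K
    have hae : ∀ᵐ ω ∂μ, ∀ k, 1 ≤ T k ω := ae_all_iff.mpr hT_ge
    have h := integral_mono_ae (integrable_const (K : ℝ))
      (integrable_finset_sum _ fun k _ => hT_int k)
      (hae.mono fun ω hω => by
        calc (K : ℝ) = ∑ k ∈ range K, (1 : ℝ) := by simp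
        _ ≤ ∑ k ∈ range K, T k ω := Finset.sum_le_sum fun k _ => hω k)
    simpa using h
  -- N K ≥ 0
  have hNnn : ∀ K, 0 ≤ N K := by
    intro K
    apply integral_nonneg_of_ae
    filter_upwards [ae_all_iff.mpr he_nonneg] with ω hω
    exact Finset.sum_nonneg fun k _ => hω k
  have hXInn : ∀ K, 0 ≤ ∫ ω, X K ω ∂μ := fun K => integral_nonneg (hXnn K)
  -- eventual bound
  have hbound : ∀ᶠ K : ℕ in atTop,
      N K / D K ≤ Ibar + (∫ ω, X K ω ∂μ) / K := by
    filter_upwards [eventually_ge_atTop 1] with K hK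
    have hKpos : (0 : ℝ) < K := by exact_mod_cast hK
    have hDpos : (0 : ℝ) < D K := lt_of_lt_of_le hKpos (hDge K)
    rw [div_le_iff₀ hDpos]
    have h1 : (∫ ω, X K ω ∂μ) ≤ ((∫ ω, X K ω ∂μ) / K) * D K := by
      have h2 : ((∫ ω, X K ω ∂μ) / K) * K ≤ ((∫ ω, X K ω ∂μ) / K) * D K :=
        mul_le_mul_of_nonneg_left (hDge K) (div_nonneg (hXInn K) hKpos.le)
      rwa [div_mul_cancel₀ _ hKpos.ne'] at h2
    have := hkey K
    nlinarith [hkey K]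
  -- conclude via limsup
  have hg : Tendsto (fun K : ℕ => Ibar + (∫ ω, X K ω ∂μ) / K) atTop (nhds (Ibar + 0)) :=
    tendsto_const_nhds.add hstable
  rw [add_zero] at hg
  calc limsup (fun K : ℕ => N K / D K) atTop
      ≤ limsup (fun K : ℕ => Ibar + (∫ ω, X K ω ∂μ) / K) atTop := by
        refine limsup_le_limsup hbound ?_ hg.isBoundedUnder_le
        exact Filter.IsBoundedUnder.isCoboundedUnder_le
          ⟨0, Filter.eventually_map.mpr (Eventually.of_forall fun K =>
            div_nonneg (hNnn K) (le_trans (Nat.cast_nonneg K) (hDge K)))⟩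
    _ = Ibar := hg.limsup_eq
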